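/- Define (c_g)_{g≥0} by c_0 = −1 and, for g ≥ 1, c_g = (1/2) Σ_{g_1=1}^{g−1} c_{g_1} c_{g−g_1} + (1/12)(5g−4)(5g−6) c_{g−1}. Then for any fixed real t_0, t_2 with t_2 ≠ 0 and 1 − 2 t_0 t_2 > 0, the power series in λ given by Σ_{g≥0} c_g t_2^{3g−1} (1 − 2 t_0 t_2)^{−(5g−1)/2} λ^{2g} has radius of convergence equal to zero. -/

import Mathlib

open Filter
open scoped ENNReal Nat

/-- The coefficients of `Σ_g c_g t₂^{3g−1} (1 − 2t₀t₂)^{−(5g−1)/2} λ^{2g}` as a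
power series `Σ_n b_n λ^n` in `λ`: `b` vanishes in odd degrees, and in degree
`n = 2g` equals `c_g t₂^{3g−1} (1 − 2t₀t₂)^{−(5g−1)/2}`. -/
noncomputable def lambdaCoeff (c : ℕ → ℝ) (t0 t2 : ℝ) (n : ℕ) : ℝ :=
  if Even n then
    c (n / 2) * t2 ^ (3 * ((n / 2 : ℕ) : ℤ) - 1)
      * (1 - 2 * t0 * t2) ^ (-(5 * ((n / 2 : ℕ) : ℝ) - 1) / 2)
  else 0

/-! The quadratic term of the recursion is a sum of products of earlier terms, so once these are
positive the linear term alone gives `c_g ≥ (g/12) c_{g−1}`, whence `c_g ≥ g!/12^g`. On the even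
coefficients `|b_{2g}| = A Bᵍ |c_g|` with `A, B > 0`, so `|b_{2g}|^{1/(2g)}` grows like `√g`
and the limsup of `|b_n|^{1/n}` is infinite. -/

lemma factorial_div_pow_le_of_recursion {c : ℕ → ℝ} (hc0 : c 0 = -1)
    (hcrec : ∀ g : ℕ, 1 ≤ g →
      c g = (1 / 2) * (∑ i ∈ Finset.Ico 1 g, c i * c (g - i))
        + (1 / 12) * (5 * (g : ℝ) - 4) * (5 * (g : ℝ) - 6) * c (g - 1)) :
    ∀ g : ℕ, 1 ≤ g → (g ! : ℝ) / 12 ^ g ≤ c g := by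
  intro g
  induction g using Nat.strong_induction_on with
  | _ g ih =>
    intro hg
    have hpos : ∀ i, 1 ≤ i → i < g → 0 < c i := fun i hi1 hi2 =>
      (by positivity : (0 : ℝ) < i ! / 12 ^ i).trans_le (ih i hi2 hi1)
    obtain ⟨k, rfl⟩ : ∃ k, g = k + 1 := ⟨g - 1, by omega⟩
    rcases Nat.eq_zero_or_pos k with rfl | hk
    · rw [hcrec 1 le_rfl]
      norm_num [hc0]
    have hsum : 0 ≤ ∑ i ∈ Finset.Ico 1 (k + 1), c i * c (k + 1 - i) :=
      Finset.sum_nonneg fun i hi => by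
        rw [Finset.mem_Ico] at hi
        exact (mul_pos (hpos i hi.1 hi.2) (hpos (k + 1 - i) (by omega) (by omega))).le
    have hk' : (1 : ℝ) ≤ k := by exact_mod_cast hk
    have hck : 0 ≤ c k := (hpos k hk (by omega)).le
    calc ((k + 1) ! : ℝ) / 12 ^ (k + 1) = ((k : ℝ) + 1) / 12 * (k ! / 12 ^ k) := by
          rw [Nat.factorial_succ]; push_cast; ring
      _ ≤ ((k : ℝ) + 1) / 12 * c k := by gcongr; exact ih k (by omega) hk
      _ ≤ (1 / 12) * (5 * ((k : ℝ) + 1) - 4) * (5 * ((k : ℝ) + 1) - 6) * c k := by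
          have hcoef : (k : ℝ) + 1 ≤ (5 * ((k : ℝ) + 1) - 4) * (5 * ((k : ℝ) + 1) - 6) := by
            nlinarith
          nlinarith [mul_le_mul_of_nonneg_right hcoef hck]
      _ ≤ c (k + 1) := by
          rw [hcrec (k + 1) (by omega)]
          push_cast
          linarith

lemma abs_lambdaCoeff_two_mul (c : ℕ → ℝ) {t0 t2 : ℝ} (ht2 : t2 ≠ 0)
    (h : 0 < 1 - 2 * t0 * t2) (g : ℕ) :
    |lambdaCoeff c t0 t2 (2 * g)| = (1 - 2 * t0 * t2) ^ ((1 : ℝ) / 2) / |t2|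
      * (|t2| ^ 3 * (1 - 2 * t0 * t2) ^ (-(5 : ℝ) / 2)) ^ g * |c g| := by
  set D := 1 - 2 * t0 * t2
  have hpow : |t2 ^ (3 * (g : ℤ) - 1)| = (|t2| ^ 3) ^ g / |t2| := by
    rw [zpow_sub₀ ht2, zpow_one, show 3 * (g : ℤ) = ((3 * g : ℕ) : ℤ) by push_cast; ring,
      zpow_natCast, abs_div, abs_pow, pow_mul]
  have hrpow : D ^ (-(5 * (g : ℝ) - 1) / 2) = (D ^ (-(5 : ℝ) / 2)) ^ g * D ^ ((1 : ℝ) / 2) := by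
    rw [show -(5 * (g : ℝ) - 1) / 2 = -(5 : ℝ) / 2 * g + 1 / 2 by ring,
      Real.rpow_add h, Real.rpow_mul h.le, Real.rpow_natCast]
  have h2g : 2 * g / 2 = g := by omega
  simp only [lambdaCoeff, if_pos (even_two_mul g), h2g]
  rw [abs_mul, abs_mul, abs_of_pos (Real.rpow_pos_of_pos h _), hpow, hrpow, mul_pow]
  field_simp

lemma frequently_pow_le_of_factorial_le {b : ℕ → ℝ} {A B : ℝ} (hA : 0 < A) (hB : 0 < B)
    (hb : ∀ᶠ g in atTop, A * B ^ g * g ! ≤ |b (2 * g)|) (M : ℝ) :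
    ∃ᶠ n in atTop, M ^ n ≤ |b n| := by
  have hfac : ∀ᶠ g in atTop, (M ^ 2 / B) ^ g / g ! < A :=
    (FloorSemiring.tendsto_pow_div_factorial_atTop (M ^ 2 / B)).eventually_lt_const hA
  have hdouble : Tendsto (fun g : ℕ => 2 * g) atTop atTop :=
    tendsto_atTop_atTop.2 fun n => ⟨n, fun g hg => by omega⟩
  refine hdouble.frequently ((hfac.and hb).mono fun g ⟨hfac_g, hb_g⟩ => ?_).frequently
  rw [div_pow, div_div, div_lt_iff₀ (by positivity)] at hfac_g
  calc M ^ (2 * g) = (M ^ 2) ^ g := pow_mul M 2 g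
    _ ≤ A * B ^ g * g ! := by rw [mul_assoc]; exact hfac_g.le
    _ ≤ |b (2 * g)| := hb_g

lemma limsup_ofReal_rpow_inv_eq_top {b : ℕ → ℝ} (hb : ∀ M : ℝ, ∃ᶠ n in atTop, M ^ n ≤ |b n|) :
    limsup (fun n : ℕ => ENNReal.ofReal (|b n| ^ ((n : ℝ)⁻¹))) atTop = ⊤ := by
  refine ENNReal.eq_top_of_forall_nnreal_le fun r => le_limsup_of_frequently_le' ?_
  refine ((hb r).and_eventually (eventually_ne_atTop 0)).mono fun n ⟨hrn, hn⟩ => ?_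
  calc (r : ℝ≥0∞) = ENNReal.ofReal (((r : ℝ) ^ n) ^ ((n : ℝ)⁻¹)) := by
        rw [Real.pow_rpow_inv_natCast r.coe_nonneg hn, ENNReal.ofReal_coe_nnreal]
    _ ≤ ENNReal.ofReal (|b n| ^ ((n : ℝ)⁻¹)) :=
        ENNReal.ofReal_le_ofReal (Real.rpow_le_rpow (by positivity) hrn (by positivity))

/-- if `c 0 = −1` and
`c g = (1/2) Σ_{g₁=1}^{g−1} c_{g₁} c_{g−g₁} + (1/12)(5g−4)(5g−6) c_{g−1}` for `g ≥ 1`,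
then for fixed `t₀, t₂` with `t₂ ≠ 0` and `1 − 2t₀t₂ > 0`, the power series
`Σ_g c_g t₂^{3g−1} (1 − 2t₀t₂)^{−(5g−1)/2} λ^{2g}` has radius of convergence
`1/limsup |b_n|^{1/n}` equal to zero. -/
theorem radius_of_convergence_zero (c : ℕ → ℝ) (hc0 : c 0 = -1)
    (hcrec : ∀ g : ℕ, 1 ≤ g →
      c g = (1 / 2) * (∑ i ∈ Finset.Ico 1 g, c i * c (g - i))
        + (1 / 12) * (5 * (g : ℝ) - 4) * (5 * (g : ℝ) - 6) * c (g - 1))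
    (t0 t2 : ℝ) (ht2 : t2 ≠ 0) (h : 0 < 1 - 2 * t0 * t2) :
    (1 : ℝ≥0∞) / Filter.limsup
        (fun n : ℕ => ENNReal.ofReal (|lambdaCoeff c t0 t2 n| ^ ((n : ℝ)⁻¹)))
        atTop = 0 := by
  set A := (1 - 2 * t0 * t2) ^ ((1 : ℝ) / 2) / |t2|
  set B := |t2| ^ 3 * (1 - 2 * t0 * t2) ^ (-(5 : ℝ) / 2)
  have hA : 0 < A := div_pos (Real.rpow_pos_of_pos h _) (abs_pos.2 ht2)
  have hB : 0 < B := mul_pos (by positivity) (Real.rpow_pos_of_pos h _)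
  have hbound : ∀ᶠ g in atTop, A * (B / 12) ^ g * g ! ≤ |lambdaCoeff c t0 t2 (2 * g)| := by
    filter_upwards [eventually_ge_atTop 1] with g hg
    rw [abs_lambdaCoeff_two_mul c ht2 h g]
    calc A * (B / 12) ^ g * g ! = A * B ^ g * (g ! / 12 ^ g) := by rw [div_pow]; ring
      _ ≤ A * B ^ g * |c g| := by
          gcongr
          exact (factorial_div_pow_le_of_recursion hc0 hcrec g hg).trans (le_abs_self _)
  rw [limsup_ofReal_rpow_inv_eq_top
    (frequently_pow_le_of_factorial_le hA (by positivity) hbound)]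
  simp
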